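/- arXiv:2509.06962 — 2 statements merged into one kernel-verified Lean document; each statement's English description precedes it below -/
import Mathlib

section
/- Let (X, F) be a Menger probabilistic metric space with t-norm min and let {x_n} be a sequence such that for some δ ∈ (0,1) and all n ≥ 1, t > 0: F_{x_n, x_{n+1}}(t) ≥ F_{x_0, x_1}(t/δ^n). Assume additionally that lim_{t→∞} F_{x_0,x_1}(t) = 1. Then {x_n} is a Cauchy sequence, i.e. for every ε > 0 there exists N such that F_{x_m, x_n}(ε) > 1 − ε for all m, n ≥ N. -/
open Filter

/-- A Menger probabilistic metric space with the t-norm `min`.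
`F x y` is the distribution function of the distance between `x` and `y`. -/
structure MengerMin (X : Type*) where
  F : X → X → ℝ → ℝ
  nonneg : ∀ x y t, 0 ≤ F x y t
  le_one : ∀ x y t, F x y t ≤ 1
  mono : ∀ x y, Monotone (F x y)
  left_cont : ∀ x y t, Tendsto (F x y) (nhdsWithin t (Set.Iio t)) (nhds (F x y t))
  zero_of_nonpos : ∀ x y t, t ≤ 0 → F x y t = 0
  tendsto_one : ∀ x y, Tendsto (F x y) atTop (nhds 1)
  eq_iff : ∀ x y, (∀ t : ℝ, 0 < t → F x y t = 1) ↔ x = y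
  symm : ∀ x y t, F x y t = F y x t
  triangle : ∀ x y z t s, 0 < t → 0 < s → min (F x y t) (F y z s) ≤ F x z (t + s)

namespace MengerMin

variable {X : Type*}

/-- τ-convergence of a sequence. -/
def TauConv (M : MengerMin X) (x : ℕ → X) (a : X) : Prop :=
  ∀ ε : ℝ, 0 < ε → ∃ N : ℕ, ∀ n ≥ N, 1 - ε < M.F (x n) a ε

/-- Cauchy sequence in the probabilistic sense. -/
def IsCauchySeq (M : MengerMin X) (x : ℕ → X) : Prop :=
  ∀ ε : ℝ, 0 < ε → ∃ N : ℕ, ∀ m ≥ N, ∀ n ≥ N, 1 - ε < M.F (x m) (x n) ε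

/-- Completeness: every Cauchy sequence τ-converges. -/
def Complete (M : MengerMin X) : Prop :=
  ∀ x : ℕ → X, M.IsCauchySeq x → ∃ a : X, M.TauConv x a

/-- Kannan-type probabilistic contraction with constant `α`. -/
def Kannan (M : MengerMin X) (S : X → X) (α : ℝ) : Prop :=
  ∀ x y : X, ∀ t : ℝ, 0 < t →
    min (M.F x (S x) (t / (2 * α))) (M.F y (S y) (t / (2 * α))) ≤ M.F (S x) (S y) t

/-- Chatterjea-type probabilistic contraction with constant `α`. -/
def Chatterjea (M : MengerMin X) (S : X → X) (α : ℝ) : Prop :=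
  ∀ x y : X, ∀ t : ℝ, 0 < t →
    min (M.F x (S y) (t / (2 * α))) (M.F y (S x) (t / (2 * α))) ≤ M.F (S x) (S y) t

end MengerMin

/-! Chaining the triangle inequality along `x m, …, x n` with radii `η δ ^ i` gives
`F (x 0) (x 1) η ≤ F (x m) (x n) (η δ ^ m / (1 - δ))`. Pick `η` with `F (x 0) (x 1) η > 1 - ε`;
for large `m` the radius on the right is at most `ε`. -/

namespace MengerMin

variable {X : Type*} (M : MengerMin X)

theorem F_self (x : X) {t : ℝ} (ht : 0 < t) : M.F x x t = 1 :=
  (M.eq_iff x x).2 rfl t ht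

theorem isCauchySeq_of_forall_lt {x : ℕ → X}
    (h : ∀ ε : ℝ, 0 < ε → ∃ N : ℕ, ∀ m ≥ N, ∀ n, m < n → 1 - ε < M.F (x m) (x n) ε) :
    M.IsCauchySeq x := by
  intro ε hε
  obtain ⟨N, hN⟩ := h ε hε
  refine ⟨N, fun m hm n hn => ?_⟩
  rcases lt_trichotomy m n with hmn | rfl | hmn
  · exact hN m hm n hmn
  · rw [M.F_self _ hε]
    linarith
  · rw [M.symm]
    exact hN n hn m hmn

theorem le_F_sum_Ico {x : ℕ → X} {r : ℕ → ℝ} {a : ℝ} {m n : ℕ} (hmn : m < n)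
    (hr : ∀ i ∈ Finset.Ico m n, 0 < r i)
    (hstep : ∀ i ∈ Finset.Ico m n, a ≤ M.F (x i) (x (i + 1)) (r i)) :
    a ≤ M.F (x m) (x n) (∑ i ∈ Finset.Ico m n, r i) := by
  induction n, hmn using Nat.le_induction with
  | base => simpa using hstep m (by simp)
  | succ n hmn ih =>
    have hsub : Finset.Ico m n ⊆ Finset.Ico m (n + 1) := Finset.Ico_subset_Ico_right n.le_succ
    have hn : n ∈ Finset.Ico m (n + 1) := Finset.mem_Ico.2 ⟨Nat.le_of_succ_le hmn, n.lt_succ_self⟩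
    have hsum_pos : 0 < ∑ i ∈ Finset.Ico m n, r i :=
      Finset.sum_pos (fun i hi => hr i (hsub hi)) (Finset.nonempty_Ico.2 hmn)
    rw [Finset.sum_Ico_succ_top (Nat.le_of_succ_le hmn)]
    calc a ≤ min (M.F (x m) (x n) (∑ i ∈ Finset.Ico m n, r i)) (M.F (x n) (x (n + 1)) (r n)) :=
          le_min (ih (fun i hi => hr i (hsub hi)) fun i hi => hstep i (hsub hi)) (hstep n hn)
      _ ≤ _ := M.triangle _ _ _ _ _ hsum_pos (hr n hn)

theorem F_le_of_geometric_step {x : ℕ → X} {δ : ℝ} (hδ0 : 0 < δ) (hδ1 : δ < 1)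
    (hstep : ∀ n t, 0 < t → M.F (x 0) (x 1) (t / δ ^ n) ≤ M.F (x n) (x (n + 1)) t)
    {η : ℝ} (hη : 0 < η) {m n : ℕ} (hmn : m < n) :
    M.F (x 0) (x 1) η ≤ M.F (x m) (x n) (η * δ ^ m / (1 - δ)) := by
  have hchain := M.le_F_sum_Ico (r := fun i => η * δ ^ i) hmn (fun i _ => by positivity)
    fun i _ => by
      simpa [(pow_pos hδ0 i).ne'] using hstep i (η * δ ^ i) (by positivity)
  refine hchain.trans (M.mono _ _ ?_)
  rw [← Finset.mul_sum, mul_div_assoc]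
  exact mul_le_mul_of_nonneg_left (geom_sum_Ico_le_of_lt_one hδ0.le hδ1) hη.le

end MengerMin

theorem cauchy_of_geometric_bound_general {X : Type*} (M : MengerMin X) (x : ℕ → X)
    (δ : ℝ) (hδ0 : 0 < δ) (hδ1 : δ < 1)
    (h : ∀ n : ℕ, 1 ≤ n → ∀ t : ℝ, 0 < t →
      M.F (x 0) (x 1) (t / δ ^ n) ≤ M.F (x n) (x (n + 1)) t) :
    M.IsCauchySeq x := by
  have hstep : ∀ n t, 0 < t → M.F (x 0) (x 1) (t / δ ^ n) ≤ M.F (x n) (x (n + 1)) t := by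
    rintro (_ | n) t ht
    · simp
    · exact h (n + 1) n.succ_pos t ht
  refine M.isCauchySeq_of_forall_lt fun ε hε => ?_
  obtain ⟨η, hηε, hη⟩ := ((M.tendsto_one (x 0) (x 1)).eventually
    (eventually_gt_nhds (by linarith : 1 - ε < 1))).and (eventually_gt_atTop 0) |>.exists
  have htail : Tendsto (fun m : ℕ => η * δ ^ m / (1 - δ)) atTop (nhds 0) := by
    simpa using ((tendsto_pow_atTop_nhds_zero_of_lt_one hδ0.le hδ1).const_mul η).div_const (1 - δ)
  obtain ⟨N, hN⟩ := eventually_atTop.1 (htail.eventually (gt_mem_nhds hε))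
  exact ⟨N, fun m hm n hmn =>
    hηε.trans_le ((M.F_le_of_geometric_step hδ0 hδ1 hstep hη hmn).trans (M.mono _ _ (hN m hm).le))⟩

theorem cauchy_of_geometric_bound {X : Type*} (M : MengerMin X) (x : ℕ → X)
    (δ : ℝ) (hδ0 : 0 < δ) (hδ1 : δ < 1)
    (h : ∀ n : ℕ, 1 ≤ n → ∀ t : ℝ, 0 < t →
      M.F (x 0) (x 1) (t / δ ^ n) ≤ M.F (x n) (x (n + 1)) t)
    (hlim : Filter.Tendsto (M.F (x 0) (x 1)) Filter.atTop (nhds 1)) :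
    M.IsCauchySeq x :=
  cauchy_of_geometric_bound_general M x δ hδ0 hδ1 h
end

section
/- Let (X, F) be a Menger probabilistic metric space with t-norm min and S : X → X a Kannan-type probabilistic contraction with constant α ∈ (0,1/2). Suppose the Picard sequence x_{n+1} = S x_n τ-converges to x* and F_{x_n, x_{n+1}}(t) → 1 for every t > 0. Then for every t > 0, F_{S x*, x*}(t) ≥ F_{x*, S x*}(t/(4α)), and consequently S x* = x*. -/
open Filter

/-!
Passing to the limit in the triangle inequality `S a → x (n+1) → a` and bounding
`F (S a) (x (n+1))` by the Kannan condition gives `F (S a) a s ≤ F (S a) a t` whenever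
`2α s < t`. Since `2α < 1`, iterating this pushes the argument on the left to infinity, where `F`
tends to `1`.
-/

open Topology

theorem Monotone.le_of_pow_mul_lt {g : ℝ → ℝ} (hg : Monotone g) {q : ℝ} (hq : 0 < q)
    (h : ∀ s t, q * s < t → g s ≤ g t) : ∀ (k : ℕ) {s t : ℝ}, q ^ k * s < t → g s ≤ g t
  | 0, s, t, hst => hg (by simpa using hst.le)
  | k + 1, s, t, hst => by
    have hqk : 0 < q ^ k := pow_pos hq k
    obtain ⟨s', hss', hs't⟩ := exists_between (show q * s < t / q ^ k by
      rw [lt_div_iff₀' hqk]; linarith [pow_succ' q k ▸ hst])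
    exact (h s s' hss').trans (hg.le_of_pow_mul_lt hq h k ((lt_div_iff₀' hqk).1 hs't))

theorem Monotone.eq_of_tendsto_of_mul_lt_imp_le {g : ℝ → ℝ} {L : ℝ} (hg : Monotone g)
    (hL : Tendsto g atTop (𝓝 L)) {q : ℝ} (hq0 : 0 < q) (hq1 : q < 1)
    (h : ∀ s t, q * s < t → g s ≤ g t) {t : ℝ} (ht : 0 < t) : g t = L := by
  refine le_antisymm (hg.ge_of_tendsto hL t) (le_of_tendsto' hL fun s => ?_)
  have hpow : Tendsto (fun k : ℕ => q ^ k * s) atTop (𝓝 0) := by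
    simpa using (tendsto_pow_atTop_nhds_zero_of_lt_one hq0.le hq1).mul_const s
  obtain ⟨k, hk⟩ := (hpow.eventually (gt_mem_nhds ht)).exists
  exact hg.le_of_pow_mul_lt hq0 h k hk

namespace MengerMin

variable {X : Type*} {M : MengerMin X}

theorem TauConv.tendsto_F {x : ℕ → X} {a : X} (h : M.TauConv x a) {s : ℝ} (hs : 0 < s) :
    Tendsto (fun n => M.F (x n) a s) atTop (𝓝 1) := by
  refine tendsto_order.2 ⟨fun b hb => ?_,
    fun b hb => Eventually.of_forall fun n => (M.le_one _ _ _).trans_lt hb⟩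
  obtain ⟨N, hN⟩ := h (min (1 - b) s) (lt_min (sub_pos.2 hb) hs)
  refine eventually_atTop.2 ⟨N, fun n hn => ?_⟩
  calc b ≤ 1 - min (1 - b) s := by linarith [min_le_left (1 - b) s]
    _ < M.F (x n) a (min (1 - b) s) := hN n hn
    _ ≤ M.F (x n) a s := M.mono _ _ (min_le_right _ _)

variable {S : X → X} {α : ℝ}

theorem Kannan.min_le_F_map_self (hK : M.Kannan S α) (a y : X) {u t : ℝ} (hu : 0 < u)
    (hut : u < t) :
    min (M.F a (S a) (u / (2 * α))) (min (M.F y (S y) (u / (2 * α))) (M.F (S y) a (t - u))) ≤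
      M.F (S a) a t :=
  calc _ ≤ min (M.F (S a) (S y) u) (M.F (S y) a (t - u)) := by
        rw [← min_assoc]; exact min_le_min_right _ (hK a y u hu)
    _ ≤ M.F (S a) a (u + (t - u)) := M.triangle _ _ _ _ _ hu (sub_pos.2 hut)
    _ = M.F (S a) a t := by rw [add_sub_cancel]

theorem Kannan.F_le_of_mul_lt (hα : 0 < α) (hK : M.Kannan S α) {x : ℕ → X}
    (hx : ∀ n, x (n + 1) = S (x n)) {a : X} (hconv : M.TauConv x a)
    (hsmall : ∀ t, 0 < t → Tendsto (fun n => M.F (x n) (x (n + 1)) t) atTop (𝓝 1))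
    {s t : ℝ} (hs : 0 < s) (hst : 2 * α * s < t) : M.F a (S a) s ≤ M.F (S a) a t := by
  have hlim : Tendsto (fun n => min (M.F a (S a) s)
      (min (M.F (x n) (x (n + 1)) s) (M.F (x (n + 1)) a (t - 2 * α * s)))) atTop
      (𝓝 (min (M.F a (S a) s) (min 1 1))) :=
    tendsto_const_nhds.min ((hsmall s hs).min
      ((tendsto_add_atTop_iff_nat 1).2 (hconv.tendsto_F (sub_pos.2 hst))))
  rw [min_self, min_eq_left (M.le_one _ _ _)] at hlim
  refine le_of_tendsto' hlim fun n => ?_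
  have hbound := hK.min_le_F_map_self a (x n) (by positivity : 0 < 2 * α * s) hst
  rwa [mul_div_cancel_left₀ s (by positivity : 2 * α ≠ 0), ← hx] at hbound

end MengerMin

theorem kannan_limit_is_fixed {X : Type*} (M : MengerMin X)
    (S : X → X) (α : ℝ) (hα0 : 0 < α) (hα : α < 1 / 2) (hK : M.Kannan S α)
    (x : ℕ → X) (hx : ∀ n : ℕ, x (n + 1) = S (x n))
    (a : X) (hconv : M.TauConv x a)
    (hsmall : ∀ t : ℝ, 0 < t →
      Filter.Tendsto (fun n => M.F (x n) (x (n + 1)) t) Filter.atTop (nhds 1)) :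
    (∀ t : ℝ, 0 < t → M.F a (S a) (t / (4 * α)) ≤ M.F (S a) a t) ∧ S a = a := by
  have key {s t : ℝ} (hs : 0 < s) (hst : 2 * α * s < t) : M.F a (S a) s ≤ M.F (S a) a t :=
    hK.F_le_of_mul_lt hα0 hx hconv hsmall hs hst
  refine ⟨fun t ht => key (by positivity) ?_, ?_⟩
  · calc 2 * α * (t / (4 * α)) = t / 2 := by field_simp; ring
      _ < t := half_lt_self ht
  · rw [← M.eq_iff]
    refine fun t ht => (M.mono _ _).eq_of_tendsto_of_mul_lt_imp_le (M.tendsto_one _ _)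
      (q := 2 * α) (by positivity) (by linarith) (fun s t hst => ?_) ht
    rcases le_or_gt s 0 with hs | hs
    · rw [M.zero_of_nonpos _ _ _ hs]
      exact M.nonneg _ _ _
    · rw [M.symm]
      exact key hs hst
end
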